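/- Let A ⊂ Z^d be a strongly admissible set, meaning A is admissible (pairwise distinct norms) and for all distinct a,b ∈ A, the set {x ∈ Z^d : |x| = |a| and |x − (a+b)| = |a − (a+b)|} has at most 2 elements. Suppose a, b ∈ Λ_f with |a| = |b|, a ≠ b, and suppose a', b' ∈ Λ_f satisfy (a,a') ∈ (Λ_f × Λ_f)_+ and (b,b') ∈ (Λ_f × Λ_f)_+. Then |a'| ≠ |b'|. -/

import Mathlib

/-!
By admissibility `ℓ(a) = ℓ(b) =: α` and `ℓ(a') = ℓ(b') =: β`. If `α = β`, then `a + a' = 2α` with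
`|a| = |a'| = |α|`, which by strict convexity of the Euclidean norm forces `a = α ∈ A`. Otherwise
`α`, `a`, `b` are three distinct lattice points on `{|x| = |α|} ∩ {|x - (α + β)| = |β|}`,
against strong admissibility of `A`.
-/

/-- Euclidean norm of an integer vector in `ℤ^d`. -/
noncomputable def znorm {d : ℕ} (a : Fin d → ℤ) : ℝ :=
  Real.sqrt (∑ i, ((a i : ℝ)) ^ 2)

theorem eq_of_norm_eq_of_add_eq_add_self {E : Type*} [NormedAddCommGroup E] [NormedSpace ℝ E]
    [StrictConvexSpace ℝ E] {x x' y : E} (hx : ‖x‖ = ‖y‖) (hx' : ‖x'‖ = ‖y‖)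
    (h : x + x' = y + y) : x = y := by
  have hxx' : x = x' := eq_of_norm_eq_of_norm_add_eq (hx.trans hx'.symm) <| by
    rw [h, hx, hx', ← two_smul ℝ y, norm_smul, Real.norm_two, two_mul]
  subst hxx'
  simpa only [← two_smul ℝ, smul_right_inj (two_ne_zero' ℝ)] using h

noncomputable def euclideanCast (d : ℕ) : (Fin d → ℤ) →+ EuclideanSpace ℝ (Fin d) :=
  (WithLp.linearEquiv 2 ℝ (Fin d → ℝ)).symm.toAddMonoidHom.comp
    ((Int.castAddHom ℝ).compLeft (Fin d))

@[simp]
theorem euclideanCast_apply {d : ℕ} (x : Fin d → ℤ) (i : Fin d) :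
    (euclideanCast d x).ofLp i = x i := rfl

theorem euclideanCast_injective (d : ℕ) : Function.Injective (euclideanCast d) := fun _ _ h =>
  funext fun i => Int.cast_injective (α := ℝ) (congrArg (fun v => v.ofLp i) h)

theorem znorm_eq_norm_euclideanCast {d : ℕ} (x : Fin d → ℤ) : znorm x = ‖euclideanCast d x‖ := by
  simp [znorm, EuclideanSpace.norm_eq]

theorem znorm_neg {d : ℕ} (x : Fin d → ℤ) : znorm (-x) = znorm x := by
  simp only [znorm_eq_norm_euclideanCast, map_neg, norm_neg]

theorem finite_setOf_znorm_eq {d : ℕ} (r : ℝ) : {x : Fin d → ℤ | znorm x = r}.Finite := by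
  refine (isCompact_closedBall (0 : Fin d → ℤ) r).finite_of_discrete.subset
    fun x (hx : znorm x = r) => ?_
  rw [znorm_eq_norm_euclideanCast] at hx
  rw [mem_closedBall_zero_iff, pi_norm_le_iff_of_nonneg (hx ▸ norm_nonneg _)]
  intro i
  rw [← hx, ← Int.norm_cast_real, ← euclideanCast_apply]
  exact PiLp.norm_apply_le _ i

theorem znorm_sub_add_eq_of_add_eq {d : ℕ} {α β x x' : Fin d → ℤ} (hβ : znorm β = znorm x')
    (h : α + β = x + x') : znorm (x - (α + β)) = znorm (α - (α + β)) := by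
  rw [show α - (α + β) = -β by abel, h, show x - (x + x') = -x' by abel, znorm_neg, znorm_neg, hβ]

theorem eq_of_znorm_eq_of_add_eq_add_self {d : ℕ} {x x' y : Fin d → ℤ} (hx : znorm y = znorm x)
    (hx' : znorm y = znorm x') (h : y + y = x + x') : x = y := by
  simp only [znorm_eq_norm_euclideanCast] at hx hx'
  exact euclideanCast_injective d <|
    eq_of_norm_eq_of_add_eq_add_self hx.symm hx'.symm (by simp only [← map_add, h])

/-- `la, lb, la', lb'` stand for `ℓ(a), ℓ(b), ℓ(a'), ℓ(b')`. -/
theorem strongly_admissible_plus_lemma_general {d : ℕ} (A : Finset (Fin d → ℤ))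
    (hadm : ∀ a ∈ A, ∀ b ∈ A, a ≠ b → znorm a ≠ znorm b)
    (hstrong : ∀ a ∈ A, ∀ b ∈ A, a ≠ b →
      Set.ncard {x : Fin d → ℤ |
        znorm x = znorm a ∧ znorm (x - (a + b)) = znorm (a - (a + b))} ≤ 2)
    (a b a' b' la lb la' lb' : Fin d → ℤ)
    (haA : a ∉ A) (hbA : b ∉ A)
    (hla : la ∈ A) (hlb : lb ∈ A) (hla' : la' ∈ A) (hlb' : lb' ∈ A)
    (hn1 : znorm la = znorm a) (hn2 : znorm lb = znorm b)
    (hn3 : znorm la' = znorm a') (hn4 : znorm lb' = znorm b')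
    (hab : znorm a = znorm b) (hne : a ≠ b)
    (hp1 : la + la' = a + a') (hp2 : lb + lb' = b + b') :
    znorm a' ≠ znorm b' := by
  intro h
  obtain rfl : la = lb := by_contra fun hl => hadm la hla lb hlb hl (by rw [hn1, hn2, hab])
  obtain rfl : la' = lb' := by_contra fun hl => hadm la' hla' lb' hlb' hl (by rw [hn3, hn4, h])
  obtain rfl | hαβ := eq_or_ne la la'
  · exact haA (eq_of_znorm_eq_of_add_eq_add_self hn1 hn3 hp1 ▸ hla)
  · set S := {x : Fin d → ℤ |
      znorm x = znorm la ∧ znorm (x - (la + la')) = znorm (la - (la + la'))}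
    have haS : a ∈ S := ⟨hn1.symm, znorm_sub_add_eq_of_add_eq hn3 hp1⟩
    have hbS : b ∈ S := ⟨(hn1.trans hab).symm, znorm_sub_add_eq_of_add_eq hn4 hp2⟩
    have hS : S.Finite := (finite_setOf_znorm_eq (znorm la)).subset fun _ hx => hx.1
    have hS3 : 2 < S.ncard := (Set.two_lt_ncard_iff hS).2
      ⟨la, a, b, ⟨rfl, rfl⟩, haS, hbS, fun h => haA (h ▸ hla), fun h => hbA (h ▸ hla), hne⟩
    exact hS3.not_ge (hstrong la hla la' hla' hαβ)

/-- Lemma on strongly admissible sets: if `a, b ∈ Λ_f` with `|a| = |b|`, `a ≠ b`,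
and `(a,a'), (b,b') ∈ (Λ_f × Λ_f)_+` (the `ℓ`-values being encoded by elements
`la, lb, la', lb'` of `A` with matching norms), then `|a'| ≠ |b'|`. -/
theorem strongly_admissible_plus_lemma {d : ℕ} (A : Finset (Fin d → ℤ))
    (hadm : ∀ a ∈ A, ∀ b ∈ A, a ≠ b → znorm a ≠ znorm b)
    (hstrong : ∀ a ∈ A, ∀ b ∈ A, a ≠ b →
      Set.ncard {x : Fin d → ℤ |
        znorm x = znorm a ∧ znorm (x - (a + b)) = znorm (a - (a + b))} ≤ 2)
    (a b a' b' la lb la' lb' : Fin d → ℤ)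
    (haA : a ∉ A) (hbA : b ∉ A) (ha'A : a' ∉ A) (hb'A : b' ∉ A)
    (hla : la ∈ A) (hlb : lb ∈ A) (hla' : la' ∈ A) (hlb' : lb' ∈ A)
    (hn1 : znorm la = znorm a) (hn2 : znorm lb = znorm b)
    (hn3 : znorm la' = znorm a') (hn4 : znorm lb' = znorm b')
    (hab : znorm a = znorm b) (hne : a ≠ b)
    (hp1 : la + la' = a + a') (hp2 : lb + lb' = b + b') :
    znorm a' ≠ znorm b' :=
  strongly_admissible_plus_lemma_general A hadm hstrong a b a' b' la lb la' lb' haA hbA hla hlb hla'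
    hlb' hn1 hn2 hn3 hn4 hab hne hp1 hp2
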